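/- Let (N,v) be a zero-normalized symmetric superadditive game with v(S) = f(|S|), and let (N,E*) be the star on n nodes with hub node 1. Then π_1(N,v,E*) = f(n)/2, and for every connected graph (N,E) and every node i ∈ N, π_1(N,v,E*) ≥ π_i(N,v,E). -/

import Mathlib

open scoped Classical

noncomputable section

variable {V : Type*} [Fintype V] [DecidableEq V]

/-- The vertex set of the connected component of `i` in the graph with edge set `L`. -/
def comp (L : Finset (Sym2 V)) (i : V) : Finset V :=
  Finset.univ.filter fun j =>
    (SimpleGraph.fromEdgeSet (↑L : Set (Sym2 V))).Reachable i j

/-- Nodes covered by the edge set `L` (the node set `N[L]`). -/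
def covered (L : Finset (Sym2 V)) : Finset V :=
  Finset.univ.filter fun i => ∃ e ∈ L, i ∈ e

/-- The collection of (vertex sets of) connected components of the edge-induced
subgraph `Γ_L = (N[L], L)`. -/
def comps (L : Finset (Sym2 V)) : Finset (Finset V) :=
  (covered L).image (comp L)

/-- The link game `w^v` associated with the game `v` and an edge set. -/
def linkGame (v : Finset V → ℝ) (L : Finset (Sym2 V)) : ℝ :=
  ∑ C ∈ comps L, v C

/-- Shapley value of player `e` in the game `w` with player set `E`. -/
def shapley {α : Type*} [DecidableEq α] (E : Finset α) (w : Finset α → ℝ) (e : α) : ℝ :=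
  ∑ L ∈ (E.erase e).powerset,
    ((L.card.factorial : ℝ) * ((E.card - L.card - 1).factorial : ℝ) / (E.card.factorial : ℝ)) *
      (w (insert e L) - w L)

/-- Harsanyi dividend of coalition `L` in the game `w`. -/
def dividend {α : Type*} [DecidableEq α] (w : Finset α → ℝ) (L : Finset α) : ℝ :=
  ∑ T ∈ L.powerset, (-1 : ℝ) ^ (L.card - T.card) * w T

/-- The position value of node `i` in the communication situation `(N, v, E)`. -/
def positionValue (v : Finset V → ℝ) (E : Finset (Sym2 V)) (i : V) : ℝ :=
  (1 / 2) * ∑ e ∈ E.filter (fun e => i ∈ e), shapley E (linkGame v) e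

def Superadditive (v : Finset V → ℝ) : Prop :=
  ∀ S T : Finset V, Disjoint S T → v S + v T ≤ v (S ∪ T)

def ConvexGame (v : Finset V → ℝ) : Prop :=
  ∀ S T : Finset V, v S + v T ≤ v (S ∪ T) + v (S ∩ T)

def ZeroNormalized (v : Finset V → ℝ) : Prop :=
  v ∅ = 0 ∧ ∀ i : V, v {i} = 0

def SymmetricGame (v : Finset V → ℝ) (f : ℕ → ℝ) : Prop :=
  ∀ S : Finset V, v S = f S.card

/-- An edge set without loops. -/
def SimpleEdges (E : Finset (Sym2 V)) : Prop := ∀ e ∈ E, ¬ e.IsDiag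

/-- The edge-induced subgraph `Γ_L = (N[L], L)` is connected. -/
def EdgeConnected (L : Finset (Sym2 V)) : Prop :=
  ∀ i ∈ covered L, ∀ j ∈ covered L,
    (SimpleGraph.fromEdgeSet (↑L : Set (Sym2 V))).Reachable i j

/-- Component of `i` in the subgraph of `Γ_L` induced on the vertex set `S`. -/
def compIn (L : Finset (Sym2 V)) (S : Finset V) (i : V) : Finset V :=
  S.filter fun j =>
    (SimpleGraph.fromEdgeSet
      (↑(L.filter fun e => ∀ x ∈ e, x ∈ S) : Set (Sym2 V))).Reachable i j

/-- Number of connected components of the subgraph of `Γ_L` induced on `S`. -/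
def numCompsIn (L : Finset (Sym2 V)) (S : Finset V) : ℕ :=
  (S.image (compIn L S)).card

/-- A cutvertex of `Γ_L`: a vertex whose removal increases the number of components. -/
def IsCutvertex (L : Finset (Sym2 V)) (i : V) : Prop :=
  i ∈ covered L ∧ numCompsIn L (covered L) < numCompsIn L ((covered L).erase i)

/-- The set of cutedges of `L`: edges both of whose endpoints are cutvertices. -/
def cutedges (L : Finset (Sym2 V)) : Finset (Sym2 V) :=
  L.filter fun e => ∀ x ∈ e, IsCutvertex L x

/-- The attachment game `v_a(S) = 2(|S| - 1)` (and `v_a(∅) = 0`). -/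
def va : Finset V → ℝ := fun S => if S = ∅ then 0 else 2 * ((S.card : ℝ) - 1)

/-- The star on `V` with hub `c`: all (non-loop) edges incident to `c`. -/
def starEdges (c : V) : Finset (Sym2 V) :=
  Finset.univ.filter fun e => ¬ e.IsDiag ∧ c ∈ e

/-- The chain (path) on `Fin n`, with edges `{i, i+1}`. -/
def chainEdges (n : ℕ) : Finset (Sym2 (Fin n)) :=
  Finset.univ.filter fun e => ∃ i j : Fin n, e = s(i, j) ∧ (j : ℕ) = (i : ℕ) + 1

/-- `F(s, r) = ∑_{k=0}^{r} (-1)^k C(r,k) f(s-k)` for `f : ℕ → ℝ`. -/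
def Ffun (f : ℕ → ℝ) (s r : ℕ) : ℝ :=
  ∑ k ∈ Finset.range (r + 1), (-1 : ℝ) ^ k * (r.choose k : ℝ) * f (s - k)

/-- `F(s, r) = ∑_{k=0}^{r} (-1)^k C(r,k) f(s-k)` for `f : ℝ → ℝ`. -/
def FfunR (f : ℝ → ℝ) (s r : ℕ) : ℝ :=
  ∑ k ∈ Finset.range (r + 1), (-1 : ℝ) ^ k * (r.choose k : ℝ) * f ((s : ℝ) - (k : ℝ))



section AuxEff
variable {α : Type*} [DecidableEq α]

lemma sum_ins (E : Finset α) (G : Finset α → ℝ) :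
    ∑ e ∈ E, ∑ L ∈ (E.erase e).powerset, G (insert e L)
      = ∑ M ∈ E.powerset, (M.card : ℝ) * G M := by
  have h2 : ∀ M ∈ E.powerset, (M.card : ℝ) * G M = ∑ _e ∈ M, G M := by
    intro M _; rw [Finset.sum_const, nsmul_eq_mul]
  rw [Finset.sum_congr rfl h2, Finset.sum_sigma', Finset.sum_sigma']
  refine Finset.sum_nbij' (fun p => ⟨insert p.1 p.2, p.1⟩) (fun p => ⟨p.2, p.1.erase p.2⟩)
    ?_ ?_ ?_ ?_ ?_
  · rintro ⟨e, L⟩ hp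
    simp only [Finset.mem_sigma, Finset.mem_powerset] at hp ⊢
    obtain ⟨he, hL⟩ := hp
    exact ⟨Finset.insert_subset he ((hL.trans (Finset.erase_subset _ _))),
      Finset.mem_insert_self _ _⟩
  · rintro ⟨M, e⟩ hp
    simp only [Finset.mem_sigma, Finset.mem_powerset] at hp ⊢
    exact ⟨hp.1 hp.2, Finset.erase_subset_erase _ hp.1⟩
  · rintro ⟨e, L⟩ hp
    simp only [Finset.mem_sigma, Finset.mem_powerset] at hp
    have : e ∉ L := fun h => (Finset.mem_erase.mp (hp.2 h)).1 rfl
    simp [Finset.erase_insert this]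
  · rintro ⟨M, e⟩ hp
    simp only [Finset.mem_sigma, Finset.mem_powerset] at hp
    simp [Finset.insert_erase hp.2]
  · rintro ⟨e, L⟩ _; rfl

lemma sum_noins (E : Finset α) (g : Finset α → ℝ) :
    ∑ e ∈ E, ∑ L ∈ (E.erase e).powerset, g L
      = ∑ L ∈ E.powerset, ((E.card - L.card : ℕ) : ℝ) * g L := by
  have hps : ∀ e, (E.erase e).powerset = E.powerset.filter (fun L => e ∉ L) := by
    intro e; ext L
    simp [Finset.mem_powerset, Finset.subset_erase, and_comm]
  simp_rw [hps, Finset.sum_filter]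
  rw [Finset.sum_comm]
  refine Finset.sum_congr rfl fun L hL => ?_
  rw [Finset.sum_ite, Finset.sum_const, Finset.sum_const, smul_zero, add_zero,
    nsmul_eq_mul]
  congr 2
  rw [← Finset.sdiff_eq_filter, Finset.card_sdiff_of_subset (Finset.mem_powerset.mp hL)]

lemma shapley_eff (E : Finset α) (w : Finset α → ℝ) :
    ∑ e ∈ E, shapley E w e = w E - w ∅ := by
  classical
  set m := E.card with hm
  set c : ℕ → ℝ := fun l =>
    (l.factorial : ℝ) * ((m - l - 1).factorial : ℝ) / (m.factorial : ℝ) with hc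
  have hmf : (m.factorial : ℝ) ≠ 0 := by positivity
  have hsplit : ∑ e ∈ E, shapley E w e
      = (∑ e ∈ E, ∑ L ∈ (E.erase e).powerset,
          (fun M => c (M.card - 1) * w M) (insert e L))
        - ∑ e ∈ E, ∑ L ∈ (E.erase e).powerset, c L.card * w L := by
    rw [← Finset.sum_sub_distrib]
    refine Finset.sum_congr rfl fun e he => ?_
    rw [shapley, ← Finset.sum_sub_distrib]
    refine Finset.sum_congr rfl fun L hL => ?_
    have heL : e ∉ L := fun h =>
      (Finset.mem_erase.mp ((Finset.mem_powerset.mp hL) h)).1 rfl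
    have hcard : (insert e L).card - 1 = L.card := by
      rw [Finset.card_insert_of_notMem heL]; omega
    simp only [hcard]
    rw [mul_sub]
  rw [hsplit, sum_ins E (fun M => c (M.card - 1) * w M),
    sum_noins E (fun L => c L.card * w L), ← Finset.sum_sub_distrib]
  have key : ∀ M ∈ E.powerset,
      (M.card : ℝ) * (c (M.card - 1) * w M)
        - ((m - M.card : ℕ) : ℝ) * (c M.card * w M)
      = (if M = E then w E else 0) + (if M = ∅ then -(w ∅) else 0) := by
    intro M hM
    have hsub := Finset.mem_powerset.mp hM
    have hle : M.card ≤ m := Finset.card_le_card hsub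
    by_cases hME : M = E
    · by_cases h0 : M = ∅
      · have hE : E = ∅ := hME ▸ h0
        subst h0
        simp only [if_pos hME, if_pos rfl, Finset.card_empty, Nat.cast_zero, zero_mul]
        have : m = 0 := by rw [hm, hE]; simp
        rw [this, hE]
        simp
      · have hcc : M.card = m := by rw [hm, hME]
        have h1 : 1 ≤ m := by
          rw [← hcc]; exact Finset.card_pos.mpr (Finset.nonempty_of_ne_empty h0)
        have e1 : m - (m - 1) - 1 = 0 := by omega
        have e2 : (m : ℝ) * ((m-1).factorial : ℝ) = (m.factorial : ℝ) := by
          rw [← Nat.cast_mul, Nat.mul_factorial_pred (by omega)]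
        have e0 : m - M.card = 0 := by omega
        have hcoef : (M.card : ℝ) * c (M.card - 1) - ((m - M.card : ℕ) : ℝ) * c M.card
            = 1 := by
          rw [e0, hcc]
          simp only [hc, e1, Nat.cast_zero, Nat.factorial_zero, Nat.cast_one,
            mul_one, zero_mul, sub_zero]
          field_simp
          linear_combination e2
        rw [if_pos hME, if_neg h0, add_zero, ← hME]
        linear_combination (w M) * hcoef
    · by_cases h0 : M = ∅
      · subst h0
        have h1 : 1 ≤ m := by
          rcases Nat.eq_zero_or_pos m with h | h
          · exact absurd (Finset.card_eq_zero.mp h).symm hME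
          · exact h
        have e2 : (m : ℝ) * ((m-1).factorial : ℝ) = (m.factorial : ℝ) := by
          rw [← Nat.cast_mul, Nat.mul_factorial_pred (by omega)]
        have hcoef : ((∅ : Finset α).card : ℝ) * c ((∅ : Finset α).card - 1)
            - ((m - (∅ : Finset α).card : ℕ) : ℝ) * c (∅ : Finset α).card = -1 := by
          simp only [Finset.card_empty, Nat.cast_zero, zero_mul, zero_sub,
            Nat.sub_zero, hc, Nat.factorial_zero, Nat.cast_one, one_mul]
          field_simp
          linear_combination (-1) * e2
        rw [if_neg hME, if_pos rfl, zero_add]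
        linear_combination (w (∅ : Finset α)) * hcoef
      · have hlt : M.card < m := by
          rcases lt_or_eq_of_le hle with h | h
          · exact h
          · exact absurd (Finset.eq_of_subset_of_card_le hsub (le_of_eq h.symm)) hME
        have hpos : 1 ≤ M.card := Finset.card_pos.mpr (Finset.nonempty_of_ne_empty h0)
        set l := M.card with hl
        have e1 : m - (l - 1) - 1 = m - l := by omega
        have e2 : (l : ℝ) * ((l-1).factorial : ℝ) = (l.factorial : ℝ) := by
          rw [← Nat.cast_mul, Nat.mul_factorial_pred (by omega)]
        have e3 : ((m - l : ℕ) : ℝ) * ((m - l - 1).factorial : ℝ)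
            = ((m - l).factorial : ℝ) := by
          rw [← Nat.cast_mul, Nat.mul_factorial_pred (by omega)]
        have hcoef : (l : ℝ) * c (l - 1) - ((m - l : ℕ) : ℝ) * c l = 0 := by
          simp only [hc, e1]
          linear_combination (((m-l).factorial : ℝ)/(m.factorial : ℝ)) * e2
            - ((l.factorial : ℝ)/(m.factorial : ℝ)) * e3
        rw [if_neg hME, if_neg h0, add_zero]
        linear_combination (w M) * hcoef
  rw [Finset.sum_congr rfl key, Finset.sum_add_distrib,
    Finset.sum_ite_eq' E.powerset E (fun _ => w E),
    Finset.sum_ite_eq' E.powerset ∅ (fun _ => -(w ∅)),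
    if_pos (Finset.mem_powerset.mpr subset_rfl),
    if_pos (Finset.mem_powerset.mpr (Finset.empty_subset E))]
  ring

end AuxEff

section AuxGraph

lemma v_nonneg (v : Finset V → ℝ) (hzn : ZeroNormalized v) (hsup : Superadditive v)
    (S : Finset V) : 0 ≤ v S := by
  induction S using Finset.induction_on with
  | empty => rw [hzn.1]
  | @insert a s hx ih =>
    calc (0:ℝ) ≤ v {a} + v s := by rw [hzn.2 a]; simpa using ih
    _ ≤ v ({a} ∪ s) := hsup {a} s (by simpa using hx)
    _ = v (insert a s) := by rw [← Finset.insert_eq]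

lemma v_mono (v : Finset V → ℝ) (hzn : ZeroNormalized v) (hsup : Superadditive v)
    {S T : Finset V} (h : S ⊆ T) : v S ≤ v T := by
  have h1 := hsup S (T \ S) Finset.disjoint_sdiff
  rw [Finset.union_sdiff_of_subset h] at h1
  have h2 := v_nonneg v hzn hsup (T \ S)
  linarith

lemma sum_v_le (v : Finset V → ℝ) (hzn : ZeroNormalized v) (hsup : Superadditive v)
    (𝒞 : Finset (Finset V)) (S : Finset V)
    (hdisj : ∀ C₁ ∈ 𝒞, ∀ C₂ ∈ 𝒞, C₁ ≠ C₂ → Disjoint C₁ C₂)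
    (hsub : ∀ C ∈ 𝒞, C ⊆ S) : ∑ C ∈ 𝒞, v C ≤ v S := by
  have main : ∀ 𝒟 : Finset (Finset V),
      (∀ C₁ ∈ 𝒟, ∀ C₂ ∈ 𝒟, C₁ ≠ C₂ → Disjoint C₁ C₂) →
      ∑ C ∈ 𝒟, v C ≤ v (𝒟.sup id) := by
    intro 𝒟
    induction 𝒟 using Finset.induction_on with
    | empty => intro _; simp [hzn.1]
    | @insert a s hx ih =>
      intro hd
      rw [Finset.sum_insert hx, Finset.sup_insert]
      have hdisj2 : Disjoint a (s.sup id) := by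
        rw [Finset.disjoint_sup_right]
        intro C hC
        exact hd a (Finset.mem_insert_self a s) C (Finset.mem_insert_of_mem hC)
          (fun h => hx (h ▸ hC))
      calc v a + ∑ C ∈ s, v C
          ≤ v a + v (s.sup id) := by
            have := ih (fun C₁ h₁ C₂ h₂ hne =>
              hd C₁ (Finset.mem_insert_of_mem h₁) C₂ (Finset.mem_insert_of_mem h₂) hne)
            linarith
        _ ≤ v (a ∪ s.sup id) := hsup _ _ hdisj2
        _ = v (id a ⊔ s.sup id) := rfl
  calc ∑ C ∈ 𝒞, v C ≤ v (𝒞.sup id) := main 𝒞 hdisj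
    _ ≤ v S := v_mono v hzn hsup (Finset.sup_le fun C hC => hsub C hC)

lemma mem_comp_self (L : Finset (Sym2 V)) (i : V) : i ∈ comp L i := by
  simp only [comp, Finset.mem_filter, Finset.mem_univ, true_and]
  exact SimpleGraph.Reachable.refl i

lemma comp_eq_of_mem {L : Finset (Sym2 V)} {i j : V} (h : j ∈ comp L i) :
    comp L i = comp L j := by
  simp only [comp, Finset.mem_filter, Finset.mem_univ, true_and] at h
  ext x
  simp only [comp, Finset.mem_filter, Finset.mem_univ, true_and]
  exact ⟨fun hx => h.symm.trans hx, fun hx => h.trans hx⟩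

lemma comps_disjoint {L : Finset (Sym2 V)} {C₁ C₂ : Finset V}
    (h₁ : C₁ ∈ comps L) (h₂ : C₂ ∈ comps L) (hne : C₁ ≠ C₂) : Disjoint C₁ C₂ := by
  obtain ⟨i, _, rfl⟩ := Finset.mem_image.mp h₁
  obtain ⟨j, _, rfl⟩ := Finset.mem_image.mp h₂
  rw [Finset.disjoint_left]
  intro x hx₁ hx₂
  exact hne ((comp_eq_of_mem hx₁).trans (comp_eq_of_mem hx₂).symm)

lemma comps_mem_nonempty {L : Finset (Sym2 V)} {C : Finset V} (h : C ∈ comps L) :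
    C.Nonempty := by
  obtain ⟨i, _, rfl⟩ := Finset.mem_image.mp h
  exact ⟨i, mem_comp_self L i⟩

lemma comp_mono {L L' : Finset (Sym2 V)} (h : L ⊆ L') (i : V) :
    comp L i ⊆ comp L' i := by
  intro x hx
  simp only [comp, Finset.mem_filter, Finset.mem_univ, true_and] at hx ⊢
  exact hx.mono (SimpleGraph.fromEdgeSet_mono (by exact_mod_cast h))

lemma covered_mono {L L' : Finset (Sym2 V)} (h : L ⊆ L') : covered L ⊆ covered L' := by
  intro x hx
  simp only [covered, Finset.mem_filter, Finset.mem_univ, true_and] at hx ⊢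
  obtain ⟨e, he, hxe⟩ := hx
  exact ⟨e, h he, hxe⟩

lemma linkGame_le (v : Finset V → ℝ) (hzn : ZeroNormalized v) (hsup : Superadditive v)
    (L : Finset (Sym2 V)) : linkGame v L ≤ v Finset.univ :=
  sum_v_le v hzn hsup (comps L) Finset.univ
    (fun _ h₁ _ h₂ hne => comps_disjoint h₁ h₂ hne)
    (fun C _ => C.subset_univ)

lemma linkGame_mono (v : Finset V → ℝ) (hzn : ZeroNormalized v) (hsup : Superadditive v)
    {L L' : Finset (Sym2 V)} (hLL : L ⊆ L') : linkGame v L ≤ linkGame v L' := by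
  have hBU : comps L = (comps L').biUnion (fun C' => (comps L).filter (· ⊆ C')) := by
    ext C
    simp only [Finset.mem_biUnion, Finset.mem_filter]
    constructor
    · intro hC
      obtain ⟨i, hi, rfl⟩ := Finset.mem_image.mp hC
      exact ⟨comp L' i, Finset.mem_image_of_mem _ (covered_mono hLL hi), hC,
        comp_mono hLL i⟩
    · rintro ⟨C', _, hC, _⟩
      exact hC
  have hpd : Set.PairwiseDisjoint (↑(comps L'))
      (fun C' => (comps L).filter (· ⊆ C')) := by
    intro C₁ h₁ C₂ h₂ hne
    simp only [Function.onFun]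
    rw [Finset.disjoint_left]
    intro C hC₁ hC₂
    rw [Finset.mem_filter] at hC₁ hC₂
    obtain ⟨x, hx⟩ := comps_mem_nonempty hC₁.1
    exact Finset.disjoint_left.mp (comps_disjoint h₁ h₂ hne) (hC₁.2 hx) (hC₂.2 hx)
  rw [linkGame, linkGame, hBU, Finset.sum_biUnion hpd]
  refine Finset.sum_le_sum fun C' hC' => ?_
  refine sum_v_le v hzn hsup _ C' ?_ ?_
  · intro C₁ h₁ C₂ h₂ hne
    exact comps_disjoint (Finset.mem_filter.mp h₁).1 (Finset.mem_filter.mp h₂).1 hne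
  · intro C hC
    exact (Finset.mem_filter.mp hC).2

lemma linkGame_empty (v : Finset V → ℝ) (hzn : ZeroNormalized v) :
    linkGame v (∅ : Finset (Sym2 V)) = 0 := by
  have h : covered (∅ : Finset (Sym2 V)) = ∅ := by
    ext x; simp [covered]
  rw [linkGame, comps, h]
  simp

lemma shapley_nonneg (v : Finset V → ℝ) (hzn : ZeroNormalized v) (hsup : Superadditive v)
    (E : Finset (Sym2 V)) (e : Sym2 V) : 0 ≤ shapley E (linkGame v) e := by
  refine Finset.sum_nonneg fun L _ => mul_nonneg (by positivity) ?_
  have := linkGame_mono v hzn hsup (Finset.subset_insert e L)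
  linarith

lemma linkGame_conn (v : Finset V → ℝ) [Nonempty V] (L : Finset (Sym2 V))
    (hconn : ∀ a b : V, (SimpleGraph.fromEdgeSet (↑L : Set (Sym2 V))).Reachable a b)
    (hcov : covered L = Finset.univ) : linkGame v L = v Finset.univ := by
  have hcomp : ∀ i : V, comp L i = Finset.univ := by
    intro i; ext x; simp [comp, hconn i x]
  have h : comps L = {Finset.univ} := by
    rw [comps, hcov]
    rw [Finset.image_congr (g := fun _ => Finset.univ) (fun i _ => hcomp i)]
    exact Finset.image_const Finset.univ_nonempty _
  rw [linkGame, h, Finset.sum_singleton]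

end AuxGraph

/-- the hub of the star has position value `f(n)/2`, and this is the
maximum position value over all connected graphs and all nodes. -/
theorem star_hub_max (v : Finset V → ℝ) (f : ℕ → ℝ)
    (hsym : SymmetricGame v f) (hzn : ZeroNormalized v) (hsup : Superadditive v)
    (c : V) :
    positionValue v (starEdges c) c = f (Fintype.card V) / 2 ∧
      ∀ E : Finset (Sym2 V), SimpleEdges E →
        (∀ a b : V, (SimpleGraph.fromEdgeSet (↑E : Set (Sym2 V))).Reachable a b) →
        ∀ i : V, positionValue v E i ≤ positionValue v (starEdges c) c := by
  have hNe : Nonempty V := ⟨c⟩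
  have hfil : (starEdges c).filter (fun e => c ∈ e) = starEdges c :=
    Finset.filter_eq_self.mpr fun e he => by
      simp only [starEdges, Finset.mem_filter] at he; exact he.2.2
  have hvuniv : v Finset.univ = f (Fintype.card V) := by
    rw [hsym Finset.univ, Finset.card_univ]
  have part1 : positionValue v (starEdges c) c = f (Fintype.card V) / 2 := by
    rw [positionValue, hfil, shapley_eff (starEdges c) (linkGame v),
      linkGame_empty v hzn]
    by_cases hn : 2 ≤ Fintype.card V
    · have hstarconn : ∀ a b : V,
          (SimpleGraph.fromEdgeSet (↑(starEdges c) : Set (Sym2 V))).Reachable a b := by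
        have hc : ∀ a : V, (SimpleGraph.fromEdgeSet
            (↑(starEdges c) : Set (Sym2 V))).Reachable a c := by
          intro a
          by_cases h : a = c
          · subst h; rfl
          · refine SimpleGraph.Adj.reachable ?_
            rw [SimpleGraph.fromEdgeSet_adj]
            refine ⟨?_, h⟩
            simp only [Finset.mem_coe, starEdges, Finset.mem_filter, Finset.mem_univ,
              true_and]
            exact ⟨by rw [Sym2.isDiag_iff_proj_eq]; exact h, Sym2.mem_mk_right a c⟩
        intro a b
        exact (hc a).trans (hc b).symm
      have hcov : covered (starEdges c) = Finset.univ := by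
        ext a
        simp only [covered, Finset.mem_filter, Finset.mem_univ, true_and, iff_true]
        obtain ⟨b, hb⟩ := Fintype.exists_ne_of_one_lt_card (by omega) a
        obtain ⟨p⟩ := hstarconn a b
        cases p with
        | nil => exact (hb rfl).elim
        | cons h p =>
          rw [SimpleGraph.fromEdgeSet_adj] at h
          exact ⟨_, Finset.mem_coe.mp h.1, Sym2.mem_mk_left _ _⟩
      rw [linkGame_conn v (starEdges c) hstarconn hcov, hvuniv]
      ring
    · have h1 : Fintype.card V = 1 := by
        have := Fintype.card_pos_iff.mpr hNe
        omega
      have hsub : Subsingleton V := by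
        rw [← Fintype.card_le_one_iff_subsingleton]; omega
      have hstar : starEdges c = ∅ := by
        ext e
        have hd : e.IsDiag := by
          induction e using Sym2.ind with
          | _ x y => rw [Sym2.isDiag_iff_proj_eq]; exact Subsingleton.elim x y
        simp [starEdges, hd]
      have hf1 : f 1 = 0 := by
        have h := hsym ({c} : Finset V)
        rw [Finset.card_singleton, hzn.2 c] at h
        exact h.symm
      rw [hstar, linkGame_empty v hzn, h1, hf1]
      norm_num
  refine ⟨part1, fun E hE hconn i => ?_⟩
  rw [part1]
  have h1 : positionValue v E i ≤ (1/2) * ∑ e ∈ E, shapley E (linkGame v) e := by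
    rw [positionValue]
    have := Finset.sum_le_sum_of_subset_of_nonneg
      (Finset.filter_subset (fun e => i ∈ e) E)
      (fun e _ _ => shapley_nonneg v hzn hsup E e)
    linarith
  have h2 : ∑ e ∈ E, shapley E (linkGame v) e = linkGame v E := by
    rw [shapley_eff, linkGame_empty v hzn]; ring
  have h3 := linkGame_le v hzn hsup E
  rw [h2] at h1
  rw [← hvuniv]
  linarith

end
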